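/- arXiv:2012.00264 — 6 statements merged into one kernel-verified Lean document; each statement's English description precedes it below -/
import Mathlib

section
/- For every integer k and n ≥ 1, one has G_n^{(k)}(1) + G_n^{(k)} = 2·∑_{m=1}^{n} S_1(n,m)/m^{k-1}, where S_1(n,m) are the (signed) Stirling numbers of the first kind. -/
open Finset

noncomputable def eulerNumber : ℕ → ℝ
  | 0 => 1
  | n + 1 => -(1/2) * ∑ l ∈ (range (n+1)).attach, (((n+1).choose l.1 : ℕ) : ℝ) * eulerNumber l.1
  decreasing_by exact mem_range.mp l.2

/-- Euler polynomials `E_n(x)`, with generating function `2 e^{xt}/(e^t+1)`. -/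
noncomputable def eulerPoly (n : ℕ) (x : ℝ) : ℝ :=
  ∑ l ∈ range (n+1), (n.choose l : ℝ) * eulerNumber l * x ^ (n - l)

noncomputable def genocchiNumber : ℕ → ℝ
  | 0 => 0
  | n + 1 => (1/2) * ((if n = 0 then 2 else 0) -
      ∑ l ∈ (range (n+1)).attach, (((n+1).choose l.1 : ℕ) : ℝ) * genocchiNumber l.1)
  decreasing_by exact mem_range.mp l.2

/-- Genocchi polynomials `G_n(x)`, with generating function `2t e^{xt}/(e^t+1)`. -/
noncomputable def genocchiPoly (n : ℕ) (x : ℝ) : ℝ :=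
  ∑ l ∈ range (n+1), (n.choose l : ℝ) * genocchiNumber l * x ^ (n - l)

/-- Signed Stirling numbers of the first kind `S₁(n,m)`. -/
def stirlingS1 : ℕ → ℕ → ℤ
  | 0, 0 => 1
  | 0, _ + 1 => 0
  | _ + 1, 0 => 0
  | n + 1, j + 1 => stirlingS1 n j - n * stirlingS1 n (j + 1)

/-- Poly-Genocchi polynomials `G_n^{(k)}(x)` of index `k`, with generating function
`2 Ei_k(log(1+t)) e^{xt}/(e^t+1)`. -/
noncomputable def polyGenocchiPoly (k : ℤ) (n : ℕ) (x : ℝ) : ℝ :=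
  ∑ j ∈ Icc 1 n, (n.choose j : ℝ) *
    (∑ m ∈ Icc 1 j, (stirlingS1 j m : ℝ) / (m : ℝ) ^ (k - 1)) * eulerPoly (n - j) x

/-- Poly-Euler polynomials `E_n^{(k)}(x) = G_{n+1}^{(k)}(x)/(n+1)`. -/
noncomputable def polyEulerPoly (k : ℤ) (n : ℕ) (x : ℝ) : ℝ :=
  polyGenocchiPoly k (n + 1) x / (n + 1)

noncomputable def polyEulerNumber (k : ℤ) (n : ℕ) : ℝ := polyEulerPoly k n 0

/-- Euler function `Ē_p(x) = E_p(x - ⌊x⌋)`. -/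
noncomputable def eulerFun (p : ℕ) (x : ℝ) : ℝ := eulerPoly p (Int.fract x)

/-- Poly-Euler function `Ē_p^{(k)}(x) = E_p^{(k)}(x - ⌊x⌋)`. -/
noncomputable def polyEulerFun (k : ℤ) (p : ℕ) (x : ℝ) : ℝ := polyEulerPoly k p (Int.fract x)

/-- Dedekind type DC sum `T_p(h,m)`. -/
noncomputable def dcSum (p h m : ℕ) : ℝ :=
  2 * ∑ μ ∈ Icc 1 (m - 1), (-1 : ℝ) ^ μ * ((μ : ℝ) / m) * eulerFun p ((h * μ : ℝ) / m)

/-- Poly-Dedekind type DC sum `T_p^{(k)}(h,m)`. -/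
noncomputable def polyDC (k : ℤ) (p h m : ℕ) : ℝ :=
  2 * ∑ μ ∈ Icc 1 (m - 1), (-1 : ℝ) ^ μ * ((μ : ℝ) / m) * polyEulerFun k p ((h * μ : ℝ) / m)

lemma eulerPoly_zero (m : ℕ) : eulerPoly m 0 = eulerNumber m := by
  unfold eulerPoly
  rw [Finset.sum_eq_single m]
  · simp
  · intro l hl hne
    have h1 : l < m := lt_of_le_of_ne (Nat.lt_succ_iff.mp (mem_range.mp hl)) hne
    rw [zero_pow (Nat.sub_ne_zero_of_lt h1), mul_zero]
  · intro h; exact absurd (self_mem_range_succ m) h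

lemma eulerPoly_add (m : ℕ) :
    eulerPoly m 1 + eulerPoly m 0 = if m = 0 then 2 else 0 := by
  rw [eulerPoly_zero]
  cases m with
  | zero => simp [eulerPoly, eulerNumber]; norm_num
  | succ n =>
    simp only [Nat.succ_ne_zero, if_false]
    have key : eulerNumber (n + 1) =
        -(1/2) * ∑ l ∈ range (n+1), (((n+1).choose l : ℕ) : ℝ) * eulerNumber l := by
      rw [eulerNumber]
      congr 1
      exact Finset.sum_attach _ (fun l => (((n+1).choose l : ℕ) : ℝ) * eulerNumber l)
    have : eulerPoly (n+1) 1 = ∑ l ∈ range (n+2), (((n+1).choose l : ℕ) : ℝ) * eulerNumber l := by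
      unfold eulerPoly
      apply Finset.sum_congr rfl
      intro l _; rw [one_pow, mul_one]
    rw [this, Finset.sum_range_succ]
    have hs : ∑ l ∈ range (n+1), (((n+1).choose l : ℕ) : ℝ) * eulerNumber l
        = -2 * eulerNumber (n+1) := by
      have := key
      field_simp at this ⊢
      linarith
    rw [hs]
    simp
    ring

theorem stmt2 (k : ℤ) (n : ℕ) (hn : 1 ≤ n) :
    polyGenocchiPoly k n 1 + polyGenocchiPoly k n 0 =
      2 * ∑ m ∈ Icc 1 n, (stirlingS1 n m : ℝ) / (m : ℝ) ^ (k - 1) := by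
  unfold polyGenocchiPoly
  rw [← Finset.sum_add_distrib]
  have : ∀ j ∈ Icc 1 n,
      (n.choose j : ℝ) * (∑ m ∈ Icc 1 j, (stirlingS1 j m : ℝ) / (m : ℝ) ^ (k - 1)) * eulerPoly (n - j) 1 +
      (n.choose j : ℝ) * (∑ m ∈ Icc 1 j, (stirlingS1 j m : ℝ) / (m : ℝ) ^ (k - 1)) * eulerPoly (n - j) 0
      = (n.choose j : ℝ) * (∑ m ∈ Icc 1 j, (stirlingS1 j m : ℝ) / (m : ℝ) ^ (k - 1)) *
          (if n - j = 0 then 2 else 0) := by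
    intro j _
    rw [← mul_add, eulerPoly_add]
  rw [Finset.sum_congr rfl this, Finset.sum_eq_single n]
  · simp [mul_comm]
  · intro j hj hne
    have hj' := mem_Icc.mp hj
    have : n - j ≠ 0 := Nat.sub_ne_zero_of_lt (lt_of_le_of_ne hj'.2 hne)
    simp [this]
  · intro h
    exact absurd (mem_Icc.mpr ⟨hn, le_refl n⟩) h
end

section
/- For all positive integers x and n and any integer k, (-1)^{x-1} G_n^{(k)}(x) + G_n^{(k)} = 2·∑_{m=1}^{n} ∑_{j=1}^{m} ∑_{i=0}^{x-1} (-1)^i i^{n-m} C(n,m) S_1(m,j)/j^{k-1}. -/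
open Finset

lemma eulerNumber_succ (n : ℕ) : eulerNumber (n+1) =
    -(1/2) * ∑ l ∈ range (n+1), ((n+1).choose l : ℝ) * eulerNumber l := by
  rw [eulerNumber, ← Finset.sum_attach (range (n+1))
    (fun l => (((n+1).choose l : ℕ) : ℝ) * eulerNumber l)]

lemma euler_sum (m : ℕ) :
    (∑ l ∈ range (m+1), (m.choose l : ℝ) * eulerNumber l) + eulerNumber m
      = if m = 0 then 2 else 0 := by
  cases m with
  | zero => norm_num [eulerNumber]
  | succ n =>
    rw [Finset.sum_range_succ, eulerNumber_succ]
    simp only [Nat.choose_self, Nat.cast_one, Nat.succ_ne_zero, if_false]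
    ring

lemma choose_swap {n l k : ℕ} (h : l + k ≤ n) :
    (n.choose l) * ((n - l).choose k) = (n.choose k) * ((n - k).choose l) := by
  have h1 := Nat.choose_mul (n := n) (Nat.le_add_right l k)
  have h2 := Nat.choose_mul (n := n) (Nat.le_add_left k l)
  have e1 : l + k - l = k := by omega
  have e2 : l + k - k = l := by omega
  rw [e1] at h1
  rw [e2] at h2
  have e3 := Nat.choose_symm (Nat.le_add_left k l)
  rw [e2] at e3
  rw [← h1, ← h2, e3]

lemma euler_reflect (n : ℕ) (x : ℝ) :
    eulerPoly n (x + 1) + eulerPoly n x = 2 * x ^ n := by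
  unfold eulerPoly
  have hA : ∑ l ∈ range (n+1), (n.choose l : ℝ) * eulerNumber l * (x + 1) ^ (n - l)
      = ∑ k ∈ range (n+1), ∑ l ∈ range (n+1),
          if l + k ≤ n then
            (n.choose l : ℝ) * eulerNumber l * (x ^ k * (((n - l).choose k : ℕ) : ℝ))
          else 0 := by
    rw [Finset.sum_comm]
    refine Finset.sum_congr rfl fun l hl => ?_
    have hl' : l ≤ n := Nat.lt_succ_iff.mp (mem_range.mp hl)
    have hx1 : (x + 1) ^ (n - l)
        = ∑ k ∈ range (n - l + 1), x ^ k * (((n - l).choose k : ℕ) : ℝ) := by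
      rw [add_pow]; simp
    have hset : Finset.filter (fun k => l + k ≤ n) (range (n+1)) = range (n - l + 1) := by
      ext k; simp only [mem_filter, mem_range]; omega
    rw [hx1, Finset.mul_sum, ← Finset.sum_filter, hset]
  have hB : ∑ l ∈ range (n+1), (n.choose l : ℝ) * eulerNumber l * x ^ (n - l)
      = ∑ k ∈ range (n+1), (n.choose k : ℝ) * eulerNumber (n - k) * x ^ k := by
    rw [← Finset.sum_range_reflect]
    refine Finset.sum_congr rfl fun k hk => ?_
    have hk' : k ≤ n := by have := mem_range.mp hk; omega
    have h0 : n + 1 - 1 - k = n - k := by omega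
    have h1 : n - (n - k) = k := by omega
    rw [h0, h1, Nat.choose_symm hk']
  rw [hA, hB, ← Finset.sum_add_distrib]
  have hinner : ∀ k ∈ range (n+1),
      (∑ l ∈ range (n+1),
          if l + k ≤ n then
            (n.choose l : ℝ) * eulerNumber l * (x ^ k * (((n - l).choose k : ℕ) : ℝ))
          else 0)
        + (n.choose k : ℝ) * eulerNumber (n - k) * x ^ k
      = if k = n then 2 * x ^ n else 0 := by
    intro k hk
    have hk' : k ≤ n := by have := mem_range.mp hk; omega
    have hset : Finset.filter (fun l => l + k ≤ n) (range (n+1)) = range (n - k + 1) := by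
      ext l; simp only [mem_filter, mem_range]; omega
    rw [← Finset.sum_filter, hset]
    have hfac : ∑ l ∈ range (n - k + 1),
        (n.choose l : ℝ) * eulerNumber l * (x ^ k * (((n - l).choose k : ℕ) : ℝ))
        = (n.choose k : ℝ) * x ^ k *
            ∑ l ∈ range (n - k + 1), ((n - k).choose l : ℝ) * eulerNumber l := by
      rw [Finset.mul_sum]
      refine Finset.sum_congr rfl fun l hl => ?_
      have hlk : l + k ≤ n := by have := mem_range.mp hl; omega
      have hc : (n.choose l : ℝ) * (((n - l).choose k : ℕ) : ℝ)
          = (n.choose k : ℝ) * (((n - k).choose l : ℕ) : ℝ) := by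
        exact_mod_cast congrArg (Nat.cast : ℕ → ℝ) (choose_swap hlk)
      calc (n.choose l : ℝ) * eulerNumber l * (x ^ k * (((n - l).choose k : ℕ) : ℝ))
          = (n.choose l : ℝ) * (((n - l).choose k : ℕ) : ℝ) * (eulerNumber l * x ^ k) := by ring
        _ = (n.choose k : ℝ) * (((n - k).choose l : ℕ) : ℝ) * (eulerNumber l * x ^ k) := by rw [hc]
        _ = (n.choose k : ℝ) * x ^ k * (((n - k).choose l : ℝ) * eulerNumber l) := by ring
    rw [hfac]
    have hs := euler_sum (n - k)
    have : (n.choose k : ℝ) * x ^ k *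
          (∑ l ∈ range (n - k + 1), ((n - k).choose l : ℝ) * eulerNumber l)
        + (n.choose k : ℝ) * eulerNumber (n - k) * x ^ k
        = (n.choose k : ℝ) * x ^ k *
          ((∑ l ∈ range (n - k + 1), ((n - k).choose l : ℝ) * eulerNumber l)
            + eulerNumber (n - k)) := by ring
    rw [this, hs]
    by_cases hkn : k = n
    · subst hkn
      simp only [Nat.sub_self, Nat.choose_self, Nat.cast_one, one_mul, if_pos rfl, if_true]
      ring
    · have hnk : n - k ≠ 0 := by omega
      simp [hnk, hkn]
  rw [Finset.sum_congr rfl hinner]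
  simp

lemma euler_alt (p x : ℕ) (hx : 1 ≤ x) :
    (-1 : ℝ) ^ (x - 1) * eulerPoly p x + eulerPoly p 0
      = 2 * ∑ i ∈ range x, (-1 : ℝ) ^ i * (i : ℝ) ^ p := by
  induction x, hx using Nat.le_induction with
  | base =>
    have hr := euler_reflect p 0
    rw [zero_add] at hr
    norm_num [Finset.sum_range_one]
    linarith
  | succ m hm ih =>
    have hr := euler_reflect p (m : ℝ)
    have hcast : ((m + 1 : ℕ) : ℝ) = (m : ℝ) + 1 := by push_cast; ring
    have hsub : m + 1 - 1 = m := by omega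
    have hsub2 : ((-1 : ℝ)) ^ m = (-1 : ℝ) ^ (m - 1) * (-1) := by
      rw [← pow_succ]
      congr 1
      omega
    rw [Finset.sum_range_succ, hsub, hcast]
    have : eulerPoly p ((m : ℝ) + 1) = 2 * (m : ℝ) ^ p - eulerPoly p (m : ℝ) := by linarith
    rw [this, hsub2]
    linear_combination ih


theorem stmt7 (k : ℤ) (x n : ℕ) (hx : 0 < x) (hn : 0 < n) :
    (-1 : ℝ) ^ (x - 1) * polyGenocchiPoly k n x + polyGenocchiPoly k n 0 =
      2 * ∑ m ∈ Icc 1 n, ∑ j ∈ Icc 1 m, ∑ i ∈ range x,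
        (-1 : ℝ) ^ i * (i : ℝ) ^ (n - m) * (n.choose m : ℝ) *
          (stirlingS1 m j : ℝ) / (j : ℝ) ^ (k - 1) := by
  unfold polyGenocchiPoly
  rw [Finset.mul_sum, Finset.mul_sum, ← Finset.sum_add_distrib]
  refine Finset.sum_congr rfl fun m hm => ?_
  have ha := euler_alt (n - m) x hx
  have hfac : ∀ j ∈ Icc 1 m,
      ∑ i ∈ range x, (-1 : ℝ) ^ i * (i : ℝ) ^ (n - m) * (n.choose m : ℝ) *
          (stirlingS1 m j : ℝ) / (j : ℝ) ^ (k - 1)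
        = ((stirlingS1 m j : ℝ) / (j : ℝ) ^ (k - 1)) *
            ((n.choose m : ℝ) * ∑ i ∈ range x, (-1 : ℝ) ^ i * (i : ℝ) ^ (n - m)) := by
    intro j hj
    rw [Finset.mul_sum, Finset.mul_sum]
    exact Finset.sum_congr rfl fun i _ => by ring
  rw [Finset.sum_congr rfl hfac, ← Finset.sum_mul]
  calc (-1 : ℝ) ^ (x - 1) * ((n.choose m : ℝ) *
          (∑ j ∈ Icc 1 m, (stirlingS1 m j : ℝ) / (j : ℝ) ^ (k - 1)) * eulerPoly (n - m) x)
        + (n.choose m : ℝ) * (∑ j ∈ Icc 1 m, (stirlingS1 m j : ℝ) / (j : ℝ) ^ (k - 1)) *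
            eulerPoly (n - m) 0
      = (n.choose m : ℝ) * (∑ j ∈ Icc 1 m, (stirlingS1 m j : ℝ) / (j : ℝ) ^ (k - 1)) *
          ((-1 : ℝ) ^ (x - 1) * eulerPoly (n - m) ↑x + eulerPoly (n - m) 0) := by ring
    _ = (n.choose m : ℝ) * (∑ j ∈ Icc 1 m, (stirlingS1 m j : ℝ) / (j : ℝ) ^ (k - 1)) *
          (2 * ∑ i ∈ range x, (-1 : ℝ) ^ i * (i : ℝ) ^ (n - m)) := by rw [ha]
    _ = 2 * ((∑ j ∈ Icc 1 m, (stirlingS1 m j : ℝ) / (j : ℝ) ^ (k - 1)) *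
          ((n.choose m : ℝ) * ∑ i ∈ range x, (-1 : ℝ) ^ i * (i : ℝ) ^ (n - m))) := by ring
end

section
/- For all positive integers x, n and any integer k, (-1)^{x-1} E_{n-1}^{(k)}(x) + E_{n-1}^{(k)} = (2/n)·∑_{m=1}^{n} ∑_{j=1}^{m} ∑_{i=0}^{x-1} (-1)^i i^{n-m} C(n,m) S_1(m,j)/j^{k-1}. -/
open Finset

lemma euler_rec (q : ℕ) :
    (∑ l ∈ range (q+1), (q.choose l : ℝ) * eulerNumber l) + eulerNumber q
      = if q = 0 then 2 else 0 := by
  cases q with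
  | zero => simp [eulerNumber]; norm_num
  | succ n =>
    have h : eulerNumber (n+1)
        = -(1/2) * ∑ l ∈ range (n+1), (((n+1).choose l : ℕ) : ℝ) * eulerNumber l := by
      rw [eulerNumber]
      congr 1
      exact Finset.sum_attach _ (fun l => (((n+1).choose l : ℕ) : ℝ) * eulerNumber l)
    rw [Finset.sum_range_succ]
    simp only [Nat.choose_self, Nat.cast_one, one_mul, if_neg (Nat.succ_ne_zero n)]
    rw [show (∑ l ∈ range (n+1), ((n+1).choose l : ℝ) * eulerNumber l) = -2 * eulerNumber (n+1) by
      rw [h]; ring]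
    ring

lemma choose4 (p l s : ℕ) :
    p.choose l * (p - l).choose s = p.choose s * (p - s).choose l := by
  rcases le_or_gt (l + s) p with h | h
  · have h1 : p.choose (l+s) * (l+s).choose l = p.choose l * (p - l).choose s := by
      have := Nat.choose_mul (n := p) (Nat.le_add_right l s)
      simpa [Nat.add_sub_cancel_left] using this
    have h2 : p.choose (l+s) * (l+s).choose s = p.choose s * (p - s).choose l := by
      have := Nat.choose_mul (n := p) (Nat.le_add_left s l)
      simpa [Nat.add_sub_cancel] using this
    have h3 : (l+s).choose l = (l+s).choose s := by
      rw [← Nat.choose_symm (Nat.le_add_right l s), Nat.add_sub_cancel_left]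
    rw [← h1, ← h2, h3]
  · rcases le_or_gt l p with hl | hl
    · rcases le_or_gt s p with hs | hs
      · rw [Nat.choose_eq_zero_of_lt (by omega : p - l < s),
          Nat.choose_eq_zero_of_lt (by omega : p - s < l)]
        ring
      · rw [Nat.choose_eq_zero_of_lt (by omega : p - l < s),
          Nat.choose_eq_zero_of_lt hs]
        ring
    · rw [Nat.choose_eq_zero_of_lt hl, Nat.choose_eq_zero_of_lt (by omega : p - s < l)]
      ring

lemma eulerPoly_add_one (p : ℕ) (x : ℝ) :
    eulerPoly p (x + 1) + eulerPoly p x = 2 * x ^ p := by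
  have expand : ∀ m, m ≤ p → (x+1)^m = ∑ s ∈ range (p+1), ((m.choose s : ℕ) : ℝ) * x^s := by
    intro m hm
    rw [add_pow]
    rw [← Finset.sum_subset (Finset.range_subset_range.mpr (by omega : m + 1 ≤ p + 1))
      (by intro s _ hs
          simp only [Finset.mem_range, not_lt] at hs
          rw [Nat.choose_eq_zero_of_lt (by omega)]
          simp)]
    apply Finset.sum_congr rfl; intro s _; simp [mul_comm]
  have h1 : eulerPoly p (x+1) = ∑ s ∈ range (p+1),
      (∑ l ∈ range (p+1), (p.choose s : ℝ) * ((p-s).choose l : ℝ) * eulerNumber l) * x ^ s := by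
    unfold eulerPoly
    calc ∑ l ∈ range (p+1), (p.choose l : ℝ) * eulerNumber l * (x+1)^(p-l)
        = ∑ l ∈ range (p+1), ∑ s ∈ range (p+1),
            (p.choose l : ℝ) * ((p-l).choose s : ℝ) * eulerNumber l * x^s := by
          apply Finset.sum_congr rfl; intro l _
          rw [expand (p-l) (Nat.sub_le _ _), Finset.mul_sum]
          apply Finset.sum_congr rfl; intro s _; ring
      _ = ∑ s ∈ range (p+1), ∑ l ∈ range (p+1),
            (p.choose l : ℝ) * ((p-l).choose s : ℝ) * eulerNumber l * x^s := Finset.sum_comm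
      _ = _ := by
          apply Finset.sum_congr rfl; intro s _
          rw [Finset.sum_mul]
          apply Finset.sum_congr rfl; intro l _
          have hc : (p.choose l : ℝ) * ((p-l).choose s : ℝ)
              = (p.choose s : ℝ) * ((p-s).choose l : ℝ) := by exact_mod_cast choose4 p l s
          rw [show (p.choose l : ℝ) * ((p-l).choose s : ℝ) * eulerNumber l * x^s
            = ((p.choose l : ℝ) * ((p-l).choose s : ℝ)) * (eulerNumber l * x^s) by ring, hc]
          ring
  have h2 : eulerPoly p x = ∑ s ∈ range (p+1), (p.choose s : ℝ) * eulerNumber (p-s) * x^s := by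
    unfold eulerPoly
    rw [← Finset.sum_range_reflect]
    apply Finset.sum_congr rfl; intro s hs
    have hs' : s ≤ p := by simpa [Nat.lt_succ_iff] using hs
    rw [show p + 1 - 1 - s = p - s from rfl, Nat.choose_symm hs', Nat.sub_sub_self hs']
  rw [h1, h2, ← Finset.sum_add_distrib]
  have key : ∀ s ∈ range (p+1),
      (∑ l ∈ range (p+1), (p.choose s : ℝ) * ((p-s).choose l : ℝ) * eulerNumber l) * x ^ s
        + (p.choose s : ℝ) * eulerNumber (p-s) * x^s
      = if s = p then 2 * x ^ p else 0 := by
    intro s hs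
    have hs' : s ≤ p := by simpa [Nat.lt_succ_iff] using hs
    have hshrink : ∑ l ∈ range (p+1), (p.choose s : ℝ) * ((p-s).choose l : ℝ) * eulerNumber l
        = (p.choose s : ℝ) * ∑ l ∈ range (p-s+1), ((p-s).choose l : ℝ) * eulerNumber l := by
      rw [Finset.mul_sum,
        ← Finset.sum_subset (Finset.range_subset_range.mpr (by omega : p - s + 1 ≤ p + 1))
          (by intro l _ hl
              simp only [Finset.mem_range, not_lt] at hl
              have h0 : (p-s).choose l = 0 := Nat.choose_eq_zero_of_lt (by omega)
              rw [h0]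
              simp)]
      apply Finset.sum_congr rfl; intro l _; ring
    rw [hshrink,
      show (p.choose s : ℝ) * (∑ l ∈ range (p-s+1), ((p-s).choose l : ℝ) * eulerNumber l) * x ^ s
          + (p.choose s : ℝ) * eulerNumber (p-s) * x^s
        = (p.choose s : ℝ) * ((∑ l ∈ range (p-s+1), ((p-s).choose l : ℝ) * eulerNumber l)
          + eulerNumber (p-s)) * x^s by ring,
      euler_rec (p-s)]
    by_cases h : s = p
    · subst h; simp
    · rw [if_neg (by omega), if_neg h]; ring
  rw [Finset.sum_congr rfl key]
  simp

lemma alt_sum (p : ℕ) : ∀ x : ℕ, 0 < x →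
    2 * ∑ i ∈ range x, (-1:ℝ)^i * (i:ℝ)^p
      = eulerPoly p 0 + (-1:ℝ)^(x-1) * eulerPoly p (x:ℝ) := by
  intro x
  induction x with
  | zero => intro h; omega
  | succ m ih =>
    intro _
    rcases Nat.eq_zero_or_pos m with hm | hm
    · subst hm
      have h := eulerPoly_add_one p 0
      simp only [Finset.sum_range_one, pow_zero, one_mul, Nat.cast_zero, Nat.cast_one,
        Nat.sub_self, zero_add]
      rw [show (1:ℝ) = 0 + 1 from by ring]
      linarith
    · have hih := ih hm
      have hkey := eulerPoly_add_one p (m : ℝ)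
      have hs : ((m + 1 : ℕ) : ℝ) = (m : ℝ) + 1 := by push_cast; ring
      rw [Finset.sum_range_succ, Nat.add_sub_cancel, hs]
      have hsign : (-1:ℝ)^m = -(-1:ℝ)^(m-1) := by
        obtain ⟨r, rfl⟩ := Nat.exists_eq_succ_of_ne_zero (Nat.pos_iff_ne_zero.mp hm)
        rw [Nat.succ_sub_one, pow_succ]; ring
      rw [hsign]
      linear_combination hih + (-1:ℝ)^(m-1) * hkey

theorem stmt8 (k : ℤ) (x n : ℕ) (hx : 0 < x) (hn : 0 < n) :
    (-1 : ℝ) ^ (x - 1) * polyEulerPoly k (n - 1) x + polyEulerNumber k (n - 1) =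
      (2 / (n : ℝ)) * ∑ m ∈ Icc 1 n, ∑ j ∈ Icc 1 m, ∑ i ∈ range x,
        (-1 : ℝ) ^ i * (i : ℝ) ^ (n - m) * (n.choose m : ℝ) *
          (stirlingS1 m j : ℝ) / (j : ℝ) ^ (k - 1) := by
  have hn1 : n - 1 + 1 = n := Nat.succ_pred_eq_of_pos hn
  have hncast : ((n - 1 : ℕ) : ℝ) + 1 = (n : ℝ) := by
    exact_mod_cast congrArg (Nat.cast : ℕ → ℝ) hn1
  have main : (-1:ℝ)^(x-1) * polyGenocchiPoly k n x + polyGenocchiPoly k n 0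
      = 2 * ∑ m ∈ Icc 1 n, ∑ j ∈ Icc 1 m, ∑ i ∈ range x,
        (-1 : ℝ) ^ i * (i : ℝ) ^ (n - m) * (n.choose m : ℝ) *
          (stirlingS1 m j : ℝ) / (j : ℝ) ^ (k - 1) := by
    unfold polyGenocchiPoly
    rw [Finset.mul_sum, ← Finset.sum_add_distrib, Finset.mul_sum]
    apply Finset.sum_congr rfl
    intro m _
    have halt := alt_sum (n - m) x hx
    have hR : ∀ j, (∑ i ∈ range x, (-1 : ℝ) ^ i * (i : ℝ) ^ (n - m) * (n.choose m : ℝ) *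
          (stirlingS1 m j : ℝ) / (j : ℝ) ^ (k - 1))
        = ((n.choose m : ℝ) * ((stirlingS1 m j : ℝ) / (j : ℝ) ^ (k - 1))) *
            ∑ i ∈ range x, (-1:ℝ)^i * (i:ℝ)^(n-m) := by
      intro j
      rw [Finset.mul_sum]
      exact Finset.sum_congr rfl fun i _ => by ring
    rw [Finset.sum_congr rfl fun j _ => hR j, ← Finset.sum_mul, ← Finset.mul_sum]
    linear_combination ((n.choose m : ℝ) *
      (∑ j ∈ Icc 1 m, (stirlingS1 m j : ℝ) / (j : ℝ) ^ (k - 1))) * halt.symm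
  unfold polyEulerNumber polyEulerPoly
  rw [hn1, hncast]
  calc (-1:ℝ)^(x-1) * (polyGenocchiPoly k n x / n) + polyGenocchiPoly k n 0 / n
      = ((-1:ℝ)^(x-1) * polyGenocchiPoly k n x + polyGenocchiPoly k n 0) / n := by ring
    _ = _ := by rw [main]; ring
end

section
/- For positive integers p, s with s < p and any integer k, ∑_{ν=0}^{p} C(p-ν+1, s) C(p, ν) E_ν^{(k)} = C(p,s) E_{p-s}^{(k)}(1) + C(p, s-1) E_{p-s+1}^{(k)}(1). -/
open Finset

lemma eulerPoly_one_eq (n : ℕ) :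
    eulerPoly n 1 = ∑ l ∈ range (n+1), (n.choose l : ℝ) * eulerNumber l := by
  simp [eulerPoly]

lemma trinom (N m s : ℕ) (hm : m ≤ N) :
    (N - m).choose s * N.choose m = N.choose s * (N - s).choose m := by
  rcases le_or_gt (m + s) N with h | h
  · have h1 := Nat.choose_mul (n := N) (show m ≤ m + s by omega)
    have h2 := Nat.choose_mul (n := N) (show s ≤ m + s by omega)
    rw [Nat.add_sub_cancel_left] at h1
    rw [Nat.add_sub_cancel] at h2
    have h3 : (m + s).choose m = (m + s).choose s := by
      rw [← Nat.choose_symm (by omega : m ≤ m + s)]; congr 1; omega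
    calc (N - m).choose s * N.choose m = N.choose (m+s) * (m+s).choose m := by rw [h1]; ring
    _ = N.choose (m+s) * (m+s).choose s := by rw [h3]
    _ = N.choose s * (N - s).choose m := by rw [h2]
  · have h0 : (N - m).choose s = 0 := Nat.choose_eq_zero_of_lt (by omega)
    rcases le_or_gt s N with h2 | h2
    · have : (N - s).choose m = 0 := Nat.choose_eq_zero_of_lt (by omega)
      simp [h0, this]
    · simp [h0, Nat.choose_eq_zero_of_lt h2]

lemma claimG (N s : ℕ) :
    ∑ m ∈ range (N+1), ((N-m).choose s : ℝ) * (N.choose m : ℝ) * eulerNumber m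
      = (N.choose s : ℝ) * eulerPoly (N-s) 1 := by
  have step : ∀ m ∈ range (N+1), ((N-m).choose s : ℝ) * (N.choose m : ℝ) * eulerNumber m
      = (N.choose s : ℝ) * (((N-s).choose m : ℝ) * eulerNumber m) := by
    intro m hm
    have hm' : m ≤ N := by have := mem_range.mp hm; omega
    have h : ((N-m).choose s : ℝ) * (N.choose m : ℝ) = (N.choose s : ℝ) * ((N-s).choose m : ℝ) := by
      exact_mod_cast trinom N m s hm'
    rw [← mul_assoc, h]
  rw [sum_congr rfl step, ← mul_sum]
  congr 1
  rw [eulerPoly_one_eq]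
  refine (sum_subset (range_subset_range.mpr (by omega)) ?_).symm
  intro x hx hnx
  have : N - s < x := by
    simp only [mem_range] at hx hnx; omega
  simp [Nat.choose_eq_zero_of_lt this]

lemma star (N s : ℕ) (hs : 0 < s) :
    ∑ m ∈ range (N+1), ((N+1-m).choose s : ℝ) * (N.choose m : ℝ) * eulerNumber m
      = (N.choose s : ℝ) * eulerPoly (N-s) 1 + (N.choose (s-1) : ℝ) * eulerPoly (N+1-s) 1 := by
  obtain ⟨t, rfl⟩ : ∃ t, s = t + 1 := ⟨s - 1, by omega⟩
  have key : ∀ m ∈ range (N+1), ((N+1-m).choose (t+1) : ℝ) * (N.choose m : ℝ) * eulerNumber m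
      = ((N-m).choose t : ℝ) * (N.choose m : ℝ) * eulerNumber m
        + ((N-m).choose (t+1) : ℝ) * (N.choose m : ℝ) * eulerNumber m := by
    intro m hm
    have hm' : m ≤ N := by have := mem_range.mp hm; omega
    have h1 : N + 1 - m = (N - m) + 1 := by omega
    rw [h1, Nat.choose_succ_succ]
    push_cast; ring
  rw [sum_congr rfl key, Finset.sum_add_distrib, claimG, claimG]
  have h1 : N - t = N + 1 - (t + 1) := by omega
  have h2 : t + 1 - 1 = t := rfl
  rw [h1, h2, add_comm]

noncomputable def pc (k : ℤ) (j : ℕ) : ℝ :=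
  ∑ m ∈ Icc 1 j, (stirlingS1 j m : ℝ) / (m : ℝ) ^ (k - 1)

lemma polyEulerNumber_eq (k : ℤ) (ν : ℕ) :
    polyEulerNumber k ν =
      (∑ j ∈ Icc 1 (ν+1), ((ν+1).choose j : ℝ) * pc k j * eulerNumber (ν+1-j)) / ((ν:ℝ)+1) := by
  unfold polyEulerNumber polyEulerPoly polyGenocchiPoly
  congr 1
  exact sum_congr rfl fun j _ => by rw [eulerPoly_zero]; rfl

lemma polyEulerPoly_one (k : ℤ) (n : ℕ) :
    polyEulerPoly k n 1 =
      (∑ j ∈ Icc 1 (n+1), ((n+1).choose j : ℝ) * pc k j * eulerPoly (n+1-j) 1) / ((n:ℝ)+1) := rfl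

theorem stmt11 (k : ℤ) (p s : ℕ) (hs : 0 < s) (hsp : s < p) :
    ∑ ν ∈ range (p + 1), ((p - ν + 1).choose s : ℝ) * (p.choose ν : ℝ) * polyEulerNumber k ν =
      (p.choose s : ℝ) * polyEulerPoly k (p - s) 1 +
        (p.choose (s - 1) : ℝ) * polyEulerPoly k (p - s + 1) 1 := by
  classical
  have hps : s ≤ p := hsp.le
  -- STEP 1 : LHS as a double sum over j ∈ Icc 1 (p+1)
  have step1 : ∀ ν ∈ range (p+1),
      ((p - ν + 1).choose s : ℝ) * (p.choose ν : ℝ) * polyEulerNumber k ν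
        = ∑ j ∈ Icc 1 (p+1),
            ((p - ν + 1).choose s : ℝ) * (p.choose ν : ℝ) *
              (((ν+1).choose j : ℝ) * pc k j * eulerNumber (ν+1-j)) / ((ν:ℝ)+1) := by
    intro ν hν
    have hν' : ν ≤ p := by have := mem_range.mp hν; omega
    rw [polyEulerNumber_eq]
    rw [sum_subset (Icc_subset_Icc_right (by omega : ν + 1 ≤ p + 1))
      (by
        intro x hx hnx
        have hx1 : 1 ≤ x := (mem_Icc.mp hx).1
        have : ν + 1 < x := by
          rcases mem_Icc.mp hx with ⟨h1, h2⟩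
          by_contra hcon
          exact hnx (mem_Icc.mpr ⟨h1, by omega⟩)
        simp [Nat.choose_eq_zero_of_lt this])]
    rw [← sum_div, ← mul_sum, mul_div_assoc]
  rw [sum_congr rfl step1, sum_comm]
  -- STEP 2 : inner sum evaluation
  have step2 : ∀ j ∈ Icc 1 (p+1),
      (∑ ν ∈ range (p+1),
          ((p - ν + 1).choose s : ℝ) * (p.choose ν : ℝ) *
            (((ν+1).choose j : ℝ) * pc k j * eulerNumber (ν+1-j)) / ((ν:ℝ)+1))
        = pc k j * ((p+1).choose j : ℝ) / ((p:ℝ)+1) *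
            (((p+1-j).choose s : ℝ) * eulerPoly (p+1-j-s) 1
              + ((p+1-j).choose (s-1) : ℝ) * eulerPoly (p+1-j+1-s) 1) := by
    intro j hj
    obtain ⟨h1j, hjp⟩ := mem_Icc.mp hj
    obtain ⟨i, rfl⟩ : ∃ i, j = i + 1 := ⟨j - 1, by omega⟩
    have hip : i ≤ p := by omega
    set N := p - i with hN
    -- drop ν < i
    rw [range_eq_Ico, ← sum_subset (Ico_subset_Ico (Nat.zero_le i) le_rfl)
      (by
        intro ν hν hnν
        have : ν < i := by
          simp only [mem_Ico] at hν hnν; omega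
        have h0 : (ν+1).choose (i+1) = 0 := Nat.choose_eq_zero_of_lt (by omega)
        simp [h0])]
    rw [sum_Ico_eq_sum_range]
    have hNr : p + 1 - i = N + 1 := by omega
    rw [hNr]
    have term : ∀ m ∈ range (N+1),
        ((p - (i + m) + 1).choose s : ℝ) * (p.choose (i+m) : ℝ) *
            ((((i+m)+1).choose (i+1) : ℝ) * pc k (i+1) * eulerNumber ((i+m)+1-(i+1))) / (((i+m:ℕ):ℝ)+1)
          = pc k (i+1) * ((p+1).choose (i+1) : ℝ) / ((p:ℝ)+1) *
              (((N+1-m).choose s : ℝ) * ((N.choose m) : ℝ) * eulerNumber m) := by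
      intro m hm
      have hmN : m ≤ N := by have := mem_range.mp hm; omega
      have e1 : p - (i + m) + 1 = N + 1 - m := by omega
      have e2 : (i + m) + 1 - (i + 1) = m := by omega
      have key : p.choose (i+m) * ((i+m)+1).choose (i+1) * (p+1)
          = (p+1).choose (i+1) * N.choose m * ((i+m)+1) := by
        have h1 := Nat.add_one_mul_choose_eq p (i+m)
        -- h1 : (p+1) * p.choose (i+m) = (p+1).choose (i+m+1) * (i+m+1)
        have h2 := Nat.choose_mul (n := p+1) (show i+1 ≤ i+m+1 by omega)
        -- h2 : (p+1).choose (i+m+1) * (i+m+1).choose (i+1) = (p+1).choose (i+1) * (p+1-(i+1)).choose (i+m+1-(i+1))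
        have e3 : p + 1 - (i+1) = N := by omega
        have e4 : i + m + 1 - (i+1) = m := by omega
        rw [e3, e4] at h2
        calc p.choose (i+m) * ((i+m)+1).choose (i+1) * (p+1)
            = ((p+1) * p.choose (i+m)) * ((i+m)+1).choose (i+1) := by ring
          _ = ((p+1).choose (i+m+1) * (i+m+1)) * ((i+m)+1).choose (i+1) := by rw [h1]
          _ = ((p+1).choose (i+m+1) * (i+m+1).choose (i+1)) * (i+m+1) := by ring
          _ = ((p+1).choose (i+1) * N.choose m) * (i+m+1) := by rw [h2]
          _ = (p+1).choose (i+1) * N.choose m * ((i+m)+1) := by ring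
      have keyR : (p.choose (i+m) : ℝ) * (((i+m)+1).choose (i+1) : ℝ) * ((p:ℝ)+1)
          = ((p+1).choose (i+1) : ℝ) * (N.choose m : ℝ) * (((i+m:ℕ):ℝ)+1) := by
        exact_mod_cast key
      rw [e1, e2]
      have hd1 : (((i+m:ℕ):ℝ)+1) ≠ 0 := by positivity
      have hd2 : ((p:ℝ)+1) ≠ 0 := by positivity
      push_cast at keyR ⊢
      field_simp
      linear_combination (((N + 1 - m).choose s : ℝ) * pc k (i+1) * eulerNumber m) * keyR
    rw [sum_congr rfl term, ← mul_sum, star N s hs]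
    have e5 : p + 1 - (i+1) = N := by omega
    rw [e5]
  rw [sum_congr rfl step2]
  -- STEP 3 : RHS as a sum over j ∈ Icc 1 (p+1)
  rw [polyEulerPoly_one, polyEulerPoly_one]
  have ext1 : (∑ j ∈ Icc 1 (p-s+1), ((p-s+1).choose j : ℝ) * pc k j * eulerPoly (p-s+1-j) 1)
      = ∑ j ∈ Icc 1 (p+1), ((p-s+1).choose j : ℝ) * pc k j * eulerPoly (p-s+1-j) 1 := by
    apply sum_subset (Icc_subset_Icc_right (by omega))
    intro x hx hnx
    have : p - s + 1 < x := by simp only [mem_Icc] at hx hnx; omega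
    simp [Nat.choose_eq_zero_of_lt this]
  have ext2 : (∑ j ∈ Icc 1 (p-s+1+1), ((p-s+1+1).choose j : ℝ) * pc k j * eulerPoly (p-s+1+1-j) 1)
      = ∑ j ∈ Icc 1 (p+1), ((p-s+1+1).choose j : ℝ) * pc k j * eulerPoly (p-s+1+1-j) 1 := by
    apply sum_subset (Icc_subset_Icc_right (by omega))
    intro x hx hnx
    have : p - s + 1 + 1 < x := by simp only [mem_Icc] at hx hnx; omega
    simp [Nat.choose_eq_zero_of_lt this]
  rw [ext1, ext2]
  have comb : ∀ (a d : ℝ) (f : ℕ → ℝ),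
      a * ((∑ j ∈ Icc 1 (p+1), f j) / d) = ∑ j ∈ Icc 1 (p+1), a * f j / d := by
    intro a d f
    rw [← sum_div, ← mul_sum, mul_div_assoc]
  rw [comb, comb, ← sum_add_distrib]
  refine sum_congr rfl ?_
  intro j hj
  obtain ⟨h1j, hjp⟩ := mem_Icc.mp hj
  rw [mul_add]
  have hd0 : ((p:ℝ)+1) ≠ 0 := by positivity
  have hd1 : (((p-s:ℕ):ℝ)+1) ≠ 0 := by positivity
  have hd2 : (((p-s+1:ℕ):ℝ)+1) ≠ 0 := by positivity
  congr 1
  · -- first term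
    rcases le_or_gt j (p+1-s) with hcase | hcase
    · have eidx : p + 1 - j - s = p - s + 1 - j := by omega
      rw [eidx]
      have keyI : (p+1).choose j * (p+1-j).choose s * (p-s+1)
          = p.choose s * (p-s+1).choose j * (p+1) := by
        have t := trinom (p+1) j s (by omega)
        have u := Nat.choose_mul_succ_eq p s
        have e : p - s + 1 = p + 1 - s := by omega
        rw [e]
        calc (p+1).choose j * (p+1-j).choose s * (p+1-s)
            = ((p+1-j).choose s * (p+1).choose j) * (p+1-s) := by ring
          _ = ((p+1).choose s * (p+1-s).choose j) * (p+1-s) := by rw [t]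
          _ = ((p+1).choose s * (p+1-s)) * (p+1-s).choose j := by ring
          _ = (p.choose s * (p+1)) * (p+1-s).choose j := by rw [← u]
          _ = p.choose s * (p+1-s).choose j * (p+1) := by ring
      have keyIR : ((p+1).choose j : ℝ) * ((p+1-j).choose s : ℝ) * (((p-s:ℕ):ℝ)+1)
          = (p.choose s : ℝ) * ((p-s+1).choose j : ℝ) * ((p:ℝ)+1) := by
        exact_mod_cast keyI
      rw [div_mul_eq_mul_div, div_eq_div_iff hd0 hd1]
      linear_combination (pc k j * eulerPoly (p-s+1-j) 1) * keyIR
    · have z1 : (p+1-j).choose s = 0 := Nat.choose_eq_zero_of_lt (by omega)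
      have z2 : (p-s+1).choose j = 0 := Nat.choose_eq_zero_of_lt (by omega)
      simp [z1, z2]
  · -- second term
    rcases le_or_gt j (p+2-s) with hcase | hcase
    · have eidx : p + 1 - j + 1 - s = p - s + 1 + 1 - j := by omega
      rw [eidx]
      have keyII : (p+1).choose j * (p+1-j).choose (s-1) * (p-s+1+1)
          = p.choose (s-1) * (p-s+1+1).choose j * (p+1) := by
        have t := trinom (p+1) j (s-1) (by omega)
        have u := Nat.choose_mul_succ_eq p (s-1)
        have e : p - s + 1 + 1 = p + 1 - (s-1) := by omega
        rw [e]
        calc (p+1).choose j * (p+1-j).choose (s-1) * (p+1-(s-1))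
            = ((p+1-j).choose (s-1) * (p+1).choose j) * (p+1-(s-1)) := by ring
          _ = ((p+1).choose (s-1) * (p+1-(s-1)).choose j) * (p+1-(s-1)) := by rw [t]
          _ = ((p+1).choose (s-1) * (p+1-(s-1))) * (p+1-(s-1)).choose j := by ring
          _ = (p.choose (s-1) * (p+1)) * (p+1-(s-1)).choose j := by rw [← u]
          _ = p.choose (s-1) * (p+1-(s-1)).choose j * (p+1) := by ring
      have keyIIR : ((p+1).choose j : ℝ) * ((p+1-j).choose (s-1) : ℝ) * (((p-s+1:ℕ):ℝ)+1)
          = (p.choose (s-1) : ℝ) * ((p-s+1+1).choose j : ℝ) * ((p:ℝ)+1) := by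
        exact_mod_cast keyII
      rw [div_mul_eq_mul_div, div_eq_div_iff hd0 hd2]
      linear_combination (pc k j * eulerPoly (p-s+1+1-j) 1) * keyIIR
    · have z1 : (p+1-j).choose (s-1) = 0 := Nat.choose_eq_zero_of_lt (by omega)
      have z2 : (p-s+1+1).choose j = 0 := Nat.choose_eq_zero_of_lt (by omega)
      simp [z1, z2]
end

section
/- For every positive integer p and any integer k, ∑_{ν=0}^{p} C(p,ν) E_ν^{(k)}/(p-ν+2) = E_{p+1}^{(k)}(1)/(p+1) − (E_{p+2}^{(k)}(1) − E_{p+2}^{(k)})/((p+1)(p+2)). -/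
open Finset

-- auxiliary
noncomputable def polyC (k : ℤ) (j : ℕ) : ℝ :=
  ∑ m ∈ Icc 1 j, (stirlingS1 j m : ℝ) / (m : ℝ) ^ (k - 1)

lemma polyGenocchi_eq_range (k : ℤ) (n : ℕ) (x : ℝ) :
    polyGenocchiPoly k n x
      = ∑ j ∈ range (n+1), (n.choose j : ℝ) * polyC k j * eulerPoly (n - j) x := by
  unfold polyGenocchiPoly polyC
  refine Finset.sum_subset ?_ ?_
  · intro j hj
    rw [mem_Icc] at hj; rw [mem_range]; omega
  · intro j hj hnj
    rw [mem_range] at hj; rw [mem_Icc] at hnj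
    have : j = 0 := by omega
    subst this; simp

lemma triangle (n : ℕ) (f : ℕ → ℕ → ℝ) :
    ∑ l ∈ range (n+1), ∑ j ∈ range (l+1), f l j
      = ∑ j ∈ range (n+1), ∑ i ∈ range (n+1-j), f (j+i) j := by
  have h := sum_Ico_Ico_comm 0 (n+1) (fun j l => f l j)
  simp only [range_eq_Ico] at *
  rw [← h]
  refine Finset.sum_congr rfl fun j hj => ?_
  rw [Finset.sum_Ico_eq_sum_range, ← range_eq_Ico]

lemma genocchi_one (k : ℤ) (n : ℕ) :
    polyGenocchiPoly k n 1 = ∑ l ∈ range (n+1), (n.choose l : ℝ) * polyGenocchiPoly k l 0 := by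
  simp only [polyGenocchi_eq_range, eulerPoly_zero, Finset.mul_sum]
  rw [triangle n (fun l j => (n.choose l : ℝ) * ((l.choose j : ℝ) * polyC k j * eulerNumber (l - j)))]
  refine Finset.sum_congr rfl fun j hj => ?_
  rw [mem_range] at hj
  have hj' : j ≤ n := by omega
  have hm : n + 1 - j = (n - j) + 1 := by omega
  rw [hm]
  unfold eulerPoly
  rw [Finset.mul_sum]
  refine Finset.sum_congr rfl fun i hi => ?_
  rw [mem_range] at hi
  have hin : j + i ≤ n := by omega
  have hch : (n.choose (j+i)) * ((j+i).choose j) = n.choose j * (n - j).choose i := by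
    rw [Nat.choose_mul (n := n) (Nat.le_add_right j i)]
    congr 1
    · congr 1; omega
  have : ((j+i) - j) = i := by omega
  rw [this, one_pow]
  have hchR : (n.choose (j+i) : ℝ) * ((j+i).choose j : ℝ) = (n.choose j : ℝ) * ((n-j).choose i : ℝ) := by
    exact_mod_cast congrArg (fun t : ℕ => (t : ℝ)) hch
  linear_combination (-(polyC k j * eulerNumber i)) * hchR

lemma eulerP_one (k : ℤ) (n : ℕ) :
    polyEulerPoly k n 1 = ∑ ν ∈ range (n+1), (n.choose ν : ℝ) * polyEulerNumber k ν := by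
  unfold polyEulerPoly polyEulerNumber
  rw [genocchi_one, Finset.sum_range_succ']
  have h0 : polyGenocchiPoly k 0 0 = 0 := by simp [polyGenocchiPoly]
  rw [h0, mul_zero, add_zero, Finset.sum_div]
  refine Finset.sum_congr rfl fun ν hν => ?_
  have hkey : (ν + 1) * ((n+1).choose (ν+1)) = (n + 1) * n.choose ν := by
    rw [mul_comm ((ν:ℕ) + 1) _]
    exact (Nat.add_one_mul_choose_eq n ν).symm
  have hn1 : ((n:ℝ) + 1) ≠ 0 := by positivity
  have hv1 : ((ν:ℝ) + 1) ≠ 0 := by positivity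
  unfold polyEulerPoly
  field_simp
  have := congrArg (fun t : ℕ => (t : ℝ)) hkey
  push_cast at this
  linear_combination polyGenocchiPoly k (ν+1) 0 * this

lemma choose_frac (p ν : ℕ) (hν : ν ≤ p) :
    (p.choose ν : ℝ) / ((p - ν + 2 : ℕ) : ℝ)
      = ((p+1).choose ν : ℝ) / ((p:ℝ)+1) - ((p+2).choose ν : ℝ) / (((p:ℝ)+1)*((p:ℝ)+2)) := by
  have h1 := Nat.choose_mul_succ_eq p ν
  have h2 := Nat.choose_mul_succ_eq (p+1) ν
  have e1 : (p + 1 - ν : ℕ) = p - ν + 1 := by omega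
  have e2 : (p + 1 + 1 - ν : ℕ) = p - ν + 2 := by omega
  rw [e1] at h1; rw [e2] at h2
  have h1R : (p.choose ν : ℝ) * ((p:ℝ) + 1) = ((p+1).choose ν : ℝ) * (((p - ν : ℕ) : ℝ) + 1) := by
    exact_mod_cast h1
  have h2R : ((p+1).choose ν : ℝ) * ((p:ℝ) + 2) = ((p+2).choose ν : ℝ) * (((p - ν : ℕ) : ℝ) + 2) := by
    exact_mod_cast h2
  have hd : ((p - ν + 2 : ℕ) : ℝ) = ((p - ν : ℕ) : ℝ) + 2 := by push_cast; ring
  rw [hd]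
  set d : ℝ := ((p - ν : ℕ) : ℝ) with hdd
  have hdne : d + 2 ≠ 0 := by rw [hdd]; positivity
  have hp1 : ((p:ℝ) + 1) ≠ 0 := by positivity
  have hp2 : ((p:ℝ) + 2) ≠ 0 := by positivity
  field_simp
  linear_combination ((p:ℝ)+2) * h1R - h2R

lemma combin (p : ℕ) (a : ℕ → ℝ) :
    ∑ ν ∈ range (p + 1), (p.choose ν : ℝ) * a ν / ((p - ν + 2 : ℕ) : ℝ)
      = (∑ ν ∈ range (p+2), ((p+1).choose ν : ℝ) * a ν) / ((p:ℝ)+1)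
        - ((∑ ν ∈ range (p+3), ((p+2).choose ν : ℝ) * a ν) - a (p+2)) / (((p:ℝ)+1)*((p:ℝ)+2)) := by
  have hp1 : ((p:ℝ) + 1) ≠ 0 := by positivity
  have hp2 : ((p:ℝ) + 2) ≠ 0 := by positivity
  have key : ∀ ν ∈ range (p+1), (p.choose ν : ℝ) * a ν / ((p - ν + 2 : ℕ) : ℝ)
      = ((p+1).choose ν : ℝ) * a ν / ((p:ℝ)+1)
        - ((p+2).choose ν : ℝ) * a ν / (((p:ℝ)+1)*((p:ℝ)+2)) := by
    intro ν hν
    rw [mem_range] at hν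
    have h := choose_frac p ν (by omega)
    linear_combination (a ν) * h
  have split2 : (∑ ν ∈ range (p+3), ((p+2).choose ν : ℝ) * a ν)
      = (∑ ν ∈ range (p+2), ((p+2).choose ν : ℝ) * a ν) + a (p+2) := by
    have h := Finset.sum_range_succ (fun ν => ((p+2).choose ν : ℝ) * a ν) (p+2)
    rw [show p+2+1 = p+3 by omega] at h
    rw [h, Nat.choose_self]; push_cast; ring
  have split2' : (∑ ν ∈ range (p+2), ((p+2).choose ν : ℝ) * a ν)
      = (∑ ν ∈ range (p+1), ((p+2).choose ν : ℝ) * a ν) + ((p:ℝ)+2) * a (p+1) := by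
    have h := Finset.sum_range_succ (fun ν => ((p+2).choose ν : ℝ) * a ν) (p+1)
    rw [show p+1+1 = p+2 by omega] at h
    rw [h]
    have hc : ((p+2).choose (p+1) : ℝ) = (p:ℝ)+2 := by
      rw [show p+2 = p+1+1 by omega, Nat.choose_succ_self_right]; push_cast; ring
    rw [hc]
  have split1 : (∑ ν ∈ range (p+2), ((p+1).choose ν : ℝ) * a ν)
      = (∑ ν ∈ range (p+1), ((p+1).choose ν : ℝ) * a ν) + a (p+1) := by
    have h := Finset.sum_range_succ (fun ν => ((p+1).choose ν : ℝ) * a ν) (p+1)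
    rw [show p+1+1 = p+2 by omega] at h
    rw [h, Nat.choose_self]; push_cast; ring
  rw [split2, split2', split1, Finset.sum_congr rfl key, Finset.sum_sub_distrib,
    ← Finset.sum_div, ← Finset.sum_div]
  field_simp
  ring

theorem stmt12 (k : ℤ) (p : ℕ) (hp : 0 < p) :
    ∑ ν ∈ range (p + 1), (p.choose ν : ℝ) * polyEulerNumber k ν / ((p - ν + 2 : ℕ) : ℝ) =
      polyEulerPoly k (p + 1) 1 / (p + 1) -
        (polyEulerPoly k (p + 2) 1 - polyEulerNumber k (p + 2)) / ((p + 1) * (p + 2)) := by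
  rw [eulerP_one k (p+1), eulerP_one k (p+2), show p+1+1 = p+2 by omega,
    show p+2+1 = p+3 by omega]
  exact combin p (polyEulerNumber k)
end

section
/- For any integer k and positive integers m, p with m odd, define S_p^{(k)}(1,m) = m^p T_p^{(k)}(1,m) − 2·∑_{ν=0}^{p} C(p,ν) E_ν^{(k)} E_{p+1-ν} m^{ν-1}. Then S_p^{(k)}(1,m) = ∑_{ν=0}^{p} C(p,ν) E_ν^{(k)} ∑_{i=0}^{p-ν} C(p-ν+1, i) E_i m^{p-i}. -/
open Finset

lemma tri_swap {M : Type*} [AddCommMonoid M] (n : ℕ) (f : ℕ → ℕ → M) :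
    ∑ j ∈ range (n+1), ∑ l ∈ range (j+1), f j l
      = ∑ l ∈ range (n+1), ∑ i ∈ range (n+1-l), f (l+i) l := by
  have h : ∀ j l, j ∈ range (n+1) ∧ l ∈ range (j+1) ↔ j ∈ Icc l n ∧ l ∈ range (n+1) := by
    intro j l; simp only [mem_range, mem_Icc]; omega
  rw [Finset.sum_comm' h]
  refine Finset.sum_congr rfl fun l hl => ?_
  rw [← Finset.Ico_add_one_right_eq_Icc, Finset.sum_Ico_eq_sum_range]

lemma eulerPoly_eval_zero (n : ℕ) : eulerPoly n 0 = eulerNumber n := by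
  unfold eulerPoly
  rw [Finset.sum_eq_single n]
  · simp
  · intro l hl hln
    have hl' := mem_range.mp hl
    rw [zero_pow (by omega : n - l ≠ 0)]
    ring
  · intro h; exact absurd (self_mem_range_succ n) h

lemma eulerPoly_one (n : ℕ) : eulerPoly (n+1) 1 = - eulerNumber (n+1) := by
  unfold eulerPoly
  simp only [one_pow, mul_one]
  rw [Finset.sum_range_succ, Nat.choose_self]
  have h : ∑ l ∈ range (n+1), ((n+1).choose l : ℝ) * eulerNumber l = -2 * eulerNumber (n+1) := by
    rw [eulerNumber_succ]; ring
  rw [h]; push_cast; ring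

lemma eulerPoly_add_s14 (n : ℕ) (x y : ℝ) :
    eulerPoly n (x + y) = ∑ j ∈ range (n+1), (n.choose j : ℝ) * eulerPoly j y * x ^ (n - j) := by
  have h1 : ∑ j ∈ range (n+1), (n.choose j : ℝ) * eulerPoly j y * x ^ (n-j)
      = ∑ j ∈ range (n+1), ∑ l ∈ range (j+1),
          (n.choose j : ℝ) * ((j.choose l : ℝ) * eulerNumber l * y ^ (j-l)) * x ^ (n-j) := by
    refine Finset.sum_congr rfl fun j hj => ?_
    unfold eulerPoly
    rw [Finset.mul_sum, Finset.sum_mul]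
  rw [h1, tri_swap]
  unfold eulerPoly
  refine Finset.sum_congr rfl fun l hl => ?_
  have hln : l ≤ n := by have := mem_range.mp hl; omega
  rw [add_comm x y, add_pow, Finset.mul_sum]
  have hrange : n - l + 1 = n + 1 - l := by omega
  rw [hrange]
  refine Finset.sum_congr rfl fun i hi => ?_
  have hi' : i ≤ n - l := by have := mem_range.mp hi; omega
  have hc : ((n.choose (l+i) : ℕ) : ℝ) * (((l+i).choose l : ℕ) : ℝ)
      = ((n.choose l : ℕ) : ℝ) * (((n-l).choose i : ℕ) : ℝ) := by
    have := Nat.choose_mul (n := n) (k := l+i) (s := l) (by omega)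
    have h2 : (l + i) - l = i := by omega
    rw [h2] at this
    exact_mod_cast congrArg (Nat.cast : ℕ → ℝ) this
  have h3 : (l + i) - l = i := by omega
  have h4 : n - (l + i) = n - l - i := by omega
  rw [h3, h4]
  linear_combination (-(eulerNumber l * y ^ i * x ^ (n - l - i))) * hc

lemma eulerPoly_zero_eval (y : ℝ) : eulerPoly 0 y = 1 := by
  simp [eulerPoly, eulerNumber]

lemma eulerPoly_reflect (n : ℕ) (x : ℝ) :
    eulerPoly (n+1) (x+1) + eulerPoly (n+1) x = 2 * x ^ (n+1) := by
  have h0 : eulerPoly (n+1) x = ∑ j ∈ range (n+2),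
      ((n+1).choose j : ℝ) * eulerPoly j 0 * x ^ (n+1-j) := by
    simpa using eulerPoly_add_s14 (n+1) x 0
  rw [eulerPoly_add_s14, h0, ← Finset.sum_add_distrib]
  rw [Finset.sum_eq_single 0]
  · simp [eulerPoly_zero_eval]; ring
  · rintro (_ | b) hb hb0
    · exact absurd rfl hb0
    · rw [eulerPoly_one, eulerPoly_eval_zero]; ring
  · intro h; exact absurd (mem_range.mpr (by omega)) h

lemma alt_sum_s14 (q m : ℕ) (hq : 0 < q) (hm : Odd m) :
    2 * ∑ μ ∈ Icc 1 (m-1), (-1:ℝ)^μ * (μ:ℝ)^q = eulerPoly q (m:ℝ) + eulerNumber q := by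
  obtain ⟨q', rfl⟩ := Nat.exists_eq_succ_of_ne_zero (Nat.pos_iff_ne_zero.mp hq)
  have hm1 : 1 ≤ m := by rcases hm with ⟨t, ht⟩; omega
  have h1 : ∑ μ ∈ Icc 1 (m-1), (-1:ℝ)^μ * (μ:ℝ)^(q'+1)
      = ∑ μ ∈ range m, (-1:ℝ)^μ * (μ:ℝ)^(q'+1) := by
    rw [Finset.range_eq_Ico, Finset.sum_eq_sum_Ico_succ_bot (by omega : 0 < m)]
    rw [← Finset.Ico_add_one_right_eq_Icc]
    have h : m - 1 + 1 = m := by omega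
    simp only [Nat.succ_eq_add_one, h]
    simp
  rw [h1, Finset.mul_sum]
  have h2 : ∀ μ ∈ range m, 2 * ((-1:ℝ)^μ * (μ:ℝ)^(q'+1))
      = (-1:ℝ)^μ * eulerPoly (q'+1) (μ:ℝ) - (-1:ℝ)^(μ+1) * eulerPoly (q'+1) ((μ:ℝ)+1) := by
    intro μ hμ
    have := eulerPoly_reflect q' (μ:ℝ)
    rw [pow_succ]
    linear_combination (-((-1:ℝ)^μ)) * this
  rw [Finset.sum_congr rfl h2]
  have h3 := Finset.sum_range_sub' (fun μ => (-1:ℝ)^μ * eulerPoly (q'+1) (μ:ℝ)) m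
  have h4 : ∀ μ : ℕ, ((μ:ℝ)+1) = ((μ+1 : ℕ):ℝ) := by intro μ; push_cast; ring
  calc ∑ μ ∈ range m, ((-1:ℝ)^μ * eulerPoly (q'+1) (μ:ℝ) - (-1:ℝ)^(μ+1) * eulerPoly (q'+1) ((μ:ℝ)+1))
      = ∑ μ ∈ range m, ((-1:ℝ)^μ * eulerPoly (q'+1) ((μ:ℕ):ℝ) - (-1:ℝ)^(μ+1) * eulerPoly (q'+1) (((μ+1:ℕ)):ℝ)) := by
        refine Finset.sum_congr rfl fun μ hμ => ?_
        rw [h4]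
    _ = (-1:ℝ)^0 * eulerPoly (q'+1) ((0:ℕ):ℝ) - (-1:ℝ)^m * eulerPoly (q'+1) ((m:ℕ):ℝ) :=
        Finset.sum_range_sub' (fun μ => (-1:ℝ)^μ * eulerPoly (q'+1) ((μ:ℕ):ℝ)) m
    _ = eulerPoly (q'+1) (m:ℝ) + eulerNumber (q'+1) := by
        rw [hm.neg_one_pow]
        push_cast
        rw [eulerPoly_eval_zero]
        ring

lemma tri_swap2 {M : Type*} [AddCommMonoid M] (p : ℕ) (f : ℕ → ℕ → M) :
    ∑ ν ∈ range (p+1), ∑ j ∈ Icc 1 (ν+1), f ν j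
      = ∑ j ∈ Icc 1 (p+1), ∑ l ∈ range (p+2-j), f (j-1+l) j := by
  have h : ∀ ν j, ν ∈ range (p+1) ∧ j ∈ Icc 1 (ν+1) ↔ ν ∈ Icc (j-1) p ∧ j ∈ Icc 1 (p+1) := by
    intro ν j; simp only [mem_range, mem_Icc]; omega
  rw [Finset.sum_comm' h]
  refine Finset.sum_congr rfl fun j hj => ?_
  obtain ⟨hj1, hj2⟩ := mem_Icc.mp hj
  rw [← Finset.Ico_add_one_right_eq_Icc, Finset.sum_Ico_eq_sum_range]
  have h2 : p + 1 - (j - 1) = p + 2 - j := by omega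
  simp only [Nat.succ_eq_add_one, h2]

lemma polyGenocchiPoly_add0 (k : ℤ) (p : ℕ) (x : ℝ) :
    polyGenocchiPoly k (p+1) x
      = ∑ ν ∈ range (p+1), ((p+1).choose (ν+1) : ℝ) * polyGenocchiPoly k (ν+1) 0 * x ^ (p-ν) := by
  have hR : ∑ ν ∈ range (p+1), ((p+1).choose (ν+1) : ℝ) * polyGenocchiPoly k (ν+1) 0 * x ^ (p-ν)
      = ∑ ν ∈ range (p+1), ∑ j ∈ Icc 1 (ν+1),
          ((p+1).choose (ν+1) : ℝ) * (((ν+1).choose j : ℝ) *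
            (∑ m ∈ Icc 1 j, (stirlingS1 j m : ℝ) / (m : ℝ) ^ (k - 1)) * eulerNumber (ν+1-j))
            * x ^ (p-ν) := by
    refine Finset.sum_congr rfl fun ν hν => ?_
    unfold polyGenocchiPoly
    simp only [eulerPoly_eval_zero]
    rw [Finset.mul_sum, Finset.sum_mul]
  rw [hR, tri_swap2]
  unfold polyGenocchiPoly
  refine Finset.sum_congr rfl fun j hj => ?_
  obtain ⟨hj1, hj2⟩ := mem_Icc.mp hj
  unfold eulerPoly
  rw [Finset.mul_sum]
  have hr : p + 1 - j + 1 = p + 2 - j := by omega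
  rw [hr]
  refine Finset.sum_congr rfl fun l hl => ?_
  have hl' : l ≤ p + 1 - j := by have := mem_range.mp hl; omega
  have e1 : j - 1 + l + 1 = j + l := by omega
  have e2 : j + l - j = l := by omega
  have e3 : p - (j - 1 + l) = p + 1 - j - l := by omega
  rw [e1, e2, e3]
  have hc : ((p+1).choose (j+l) : ℝ) * ((j+l).choose j : ℝ)
      = ((p+1).choose j : ℝ) * ((p+1-j).choose l : ℝ) := by
    have := Nat.choose_mul (n := p+1) (k := j+l) (s := j) (by omega)
    rw [e2] at this
    exact_mod_cast congrArg (Nat.cast : ℕ → ℝ) this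
  linear_combination (-((∑ m ∈ Icc 1 j, (stirlingS1 j m : ℝ) / (m : ℝ) ^ (k - 1)) *
    eulerNumber l * x ^ (p+1-j-l))) * hc

lemma polyEulerPoly_eq (k : ℤ) (p : ℕ) (x : ℝ) :
    polyEulerPoly k p x = ∑ ν ∈ range (p+1), (p.choose ν : ℝ) * polyEulerNumber k ν * x ^ (p-ν) := by
  unfold polyEulerPoly polyEulerNumber polyEulerPoly
  rw [polyGenocchiPoly_add0, Finset.sum_div]
  refine Finset.sum_congr rfl fun ν hν => ?_
  have key : ((p:ℝ)+1) * (p.choose ν : ℝ) = ((p+1).choose (ν+1) : ℝ) * ((ν:ℝ)+1) := by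
    have := Nat.add_one_mul_choose_eq p ν
    exact_mod_cast congrArg (Nat.cast : ℕ → ℝ) this
  have h1 : ((p:ℝ)+1) ≠ 0 := by positivity
  have h2 : ((ν:ℝ)+1) ≠ 0 := by positivity
  field_simp
  linear_combination (-(polyGenocchiPoly k (ν+1) 0 * x ^ (p-ν))) * key

theorem stmt14 (k : ℤ) (m p : ℕ) (hm : Odd m) (hp : 0 < p) :
    (m : ℝ) ^ p * polyDC k p 1 m -
        2 * ∑ ν ∈ range (p + 1), (p.choose ν : ℝ) * polyEulerNumber k ν *
          eulerNumber (p + 1 - ν) * (m : ℝ) ^ ((ν : ℤ) - 1) =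
      ∑ ν ∈ range (p + 1), (p.choose ν : ℝ) * polyEulerNumber k ν *
        ∑ i ∈ range (p - ν + 1), ((p - ν + 1).choose i : ℝ) * eulerNumber i * (m : ℝ) ^ (p - i) := by
  have hm1 : 1 ≤ m := by rcases hm with ⟨t, ht⟩; omega
  have hmpos : (0:ℝ) < m := by exact_mod_cast Nat.pos_of_ne_zero (by omega)
  have hm0 : (m:ℝ) ≠ 0 := ne_of_gt hmpos
  have step1 : polyDC k p 1 m = 2 * ∑ μ ∈ Icc 1 (m-1), (-1:ℝ)^μ * ((μ:ℝ)/m) *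
      ∑ ν ∈ range (p+1), (p.choose ν : ℝ) * polyEulerNumber k ν * ((μ:ℝ)/m)^(p-ν) := by
    unfold polyDC polyEulerFun
    congr 1
    refine Finset.sum_congr rfl fun μ hμ => ?_
    obtain ⟨hμ1, hμ2⟩ := mem_Icc.mp hμ
    have harg : ((1:ℕ):ℝ) * (μ:ℝ) / (m:ℝ) = (μ:ℝ)/m := by push_cast; ring
    rw [harg]
    have hfr : Int.fract ((μ:ℝ)/m) = (μ:ℝ)/m := by
      rw [Int.fract_eq_self]
      constructor
      · positivity
      · rw [div_lt_one hmpos]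
        exact_mod_cast (by omega : μ < m)
    rw [hfr, polyEulerPoly_eq]
  have step2 : (m:ℝ)^p * polyDC k p 1 m
      = ∑ ν ∈ range (p+1), (p.choose ν : ℝ) * polyEulerNumber k ν * (m:ℝ)^((ν:ℤ)-1) *
          (2 * ∑ μ ∈ Icc 1 (m-1), (-1:ℝ)^μ * (μ:ℝ)^(p-ν+1)) := by
    rw [step1]
    simp only [Finset.mul_sum]
    rw [Finset.sum_comm]
    refine Finset.sum_congr rfl fun ν hν => Finset.sum_congr rfl fun μ hμ => ?_
    have hν' : ν ≤ p := by have := mem_range.mp hν; omega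
    obtain ⟨q, rfl⟩ := Nat.exists_eq_add_of_le hν'
    simp only [Nat.add_sub_cancel_left]
    rw [zpow_sub₀ hm0, zpow_one, zpow_natCast]
    field_simp
    rw [div_pow]
    field_simp
    ring
  have key : (m:ℝ)^p * polyDC k p 1 m
      = ∑ ν ∈ range (p+1), (p.choose ν : ℝ) * polyEulerNumber k ν * (m:ℝ)^((ν:ℤ)-1) *
          (eulerPoly (p-ν+1) (m:ℝ) + eulerNumber (p-ν+1)) := by
    rw [step2]
    refine Finset.sum_congr rfl fun ν hν => ?_
    rw [alt_sum_s14 (p-ν+1) m (by omega) hm]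
  rw [key, Finset.mul_sum, ← Finset.sum_sub_distrib]
  refine Finset.sum_congr rfl fun ν hν => ?_
  have hν' : ν ≤ p := by have := mem_range.mp hν; omega
  have hq : p + 1 - ν = p - ν + 1 := by omega
  rw [hq]
  have hsplit : eulerPoly (p-ν+1) (m:ℝ) = (∑ i ∈ range (p-ν+1),
      ((p-ν+1).choose i : ℝ) * eulerNumber i * (m:ℝ)^(p-ν+1-i)) + eulerNumber (p-ν+1) := by
    unfold eulerPoly
    rw [Finset.sum_range_succ, Nat.choose_self, Nat.sub_self, pow_zero]
    push_cast; ring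
  have hsig : (m:ℝ)^((ν:ℤ)-1) * ∑ i ∈ range (p-ν+1),
      ((p-ν+1).choose i : ℝ) * eulerNumber i * (m:ℝ)^(p-ν+1-i)
      = ∑ i ∈ range (p-ν+1), ((p-ν+1).choose i : ℝ) * eulerNumber i * (m:ℝ)^(p-i) := by
    rw [Finset.mul_sum]
    refine Finset.sum_congr rfl fun i hi => ?_
    have hi' : i ≤ p - ν := by have := mem_range.mp hi; omega
    have hpow : (m:ℝ)^((ν:ℤ)-1) * (m:ℝ)^(p-ν+1-i) = (m:ℝ)^(p-i) := by
      rw [← zpow_natCast (m:ℝ) (p-ν+1-i), ← zpow_add₀ hm0, ← zpow_natCast (m:ℝ) (p-i)]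
      congr 1
      omega
    linear_combination ((p-ν+1).choose i : ℝ) * eulerNumber i * hpow
  rw [hsplit, ← hsig]
  ring
end
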